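/- Symmetrization of the rest-state Salmon D2Q9 Jacobian: let h̄ > 0, e > 0 and 0 < g < 3e²/(5h̄). Let M be the 9×9 matrix with M_{0j} = 1 − 5gh̄/(3e²) for all j, M_{ij} = gh̄/(3e²) + (ξ_i·ξ_j)/(3e²) for 1 ≤ i ≤ 4, and M_{ij} = gh̄/(12e²) + (ξ_i·ξ_j)/(12e²) for 5 ≤ i ≤ 8, and let C₀ = (3e²/(gh̄))·diag(gh̄/(3e² − 5gh̄), I₄, 4·I₄). Then C₀ is symmetric positive definite and C₀·M = J₉ + (1/(gh̄))·G, where J₉ is the 9×9 all-ones matrix and G is the Gram matrix G_{ij} = ξ_i·ξ_j; in particular C₀·M is symmetric. -/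

import Mathlib

/-- Dot product on `ℝ × ℝ`. -/
def pdot (a b : ℝ × ℝ) : ℝ := a.1 * b.1 + a.2 * b.2

/-- The D2Q9 lattice velocities with lattice speed `e`. -/
def xi9 (e : ℝ) : Fin 9 → ℝ × ℝ :=
  ![(0, 0), (e, 0), (0, e), (-e, 0), (0, -e), (e, e), (-e, e), (-e, -e), (e, -e)]

/-- The Jacobian of the Salmon D2Q9 equilibrium distribution at the rest state `(h̄, 0)`. -/
noncomputable def M9 (g e hb : ℝ) : Matrix (Fin 9) (Fin 9) ℝ :=
  Matrix.of fun i j =>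
    if i = 0 then 1 - 5 * g * hb / (3 * e ^ 2)
    else if (i : ℕ) ≤ 4 then
      g * hb / (3 * e ^ 2) + pdot (xi9 e i) (xi9 e j) / (3 * e ^ 2)
    else
      g * hb / (12 * e ^ 2) + pdot (xi9 e i) (xi9 e j) / (12 * e ^ 2)

/-- The diagonal symmetrizer `C₀`. -/
noncomputable def C9 (g e hb : ℝ) : Matrix (Fin 9) (Fin 9) ℝ :=
  Matrix.diagonal fun i =>
    3 * e ^ 2 / (g * hb) *
      (if i = 0 then g * hb / (3 * e ^ 2 - 5 * g * hb)
       else if (i : ℕ) ≤ 4 then 1 else 4)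

theorem d2q9_salmon_symmetrization (hb e g : ℝ) (hhb : 0 < hb) (he : 0 < e)
    (hg0 : 0 < g) (hg : g < 3 * e ^ 2 / (5 * hb)) :
    (C9 g e hb).PosDef ∧
    C9 g e hb * M9 g e hb =
      Matrix.of (fun _ _ => (1 : ℝ)) +
        (1 / (g * hb)) • Matrix.of (fun i j => pdot (xi9 e i) (xi9 e j)) ∧
    (C9 g e hb * M9 g e hb).IsSymm := by
  have hgh : 0 < g * hb := mul_pos hg0 hhb
  have hden : 0 < 3 * e ^ 2 - 5 * g * hb := by
    have h5 : (0:ℝ) < 5 * hb := by positivity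
    have := (lt_div_iff₀ h5).mp hg
    nlinarith
  have hghne : g * hb ≠ 0 := ne_of_gt hgh
  have hdenne : 3 * e ^ 2 - 5 * g * hb ≠ 0 := ne_of_gt hden
  have hene : e ≠ 0 := ne_of_gt he
  have hprod : C9 g e hb * M9 g e hb =
      Matrix.of (fun _ _ => (1 : ℝ)) +
        (1 / (g * hb)) • Matrix.of (fun i j => pdot (xi9 e i) (xi9 e j)) := by
    ext i j
    rw [C9, Matrix.diagonal_mul]
    by_cases h0 : i = 0
    · subst h0
      have hx : xi9 e 0 = (0, 0) := rfl
      simp only [M9, Matrix.of_apply, Matrix.add_apply, Matrix.smul_apply, smul_eq_mul,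
        if_true, hx, pdot]
      field_simp
      rw [mul_div_cancel_right₀ _ (ne_of_gt (by linarith))]; ring
    · by_cases h4 : (i : ℕ) ≤ 4 <;>
        simp only [M9, Matrix.of_apply, Matrix.add_apply, Matrix.smul_apply, smul_eq_mul,
          h0, h4, if_true, if_false] <;>
        field_simp <;> ring
  refine ⟨?_, hprod, ?_⟩
  · rw [C9, Matrix.posDef_diagonal_iff]
    intro i
    fin_cases i <;> simp
    · exact mul_pos (by positivity) (div_pos hgh hden)
    all_goals positivity
  · rw [hprod]
    ext i j
    simp only [Matrix.IsSymm, Matrix.transpose_apply, Matrix.add_apply, Matrix.smul_apply,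
      Matrix.of_apply, smul_eq_mul, pdot]
    ring
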